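/- arXiv:2301.03138 — 3 statements merged into one kernel-verified Lean document; each statement's English description precedes it below -/
import Mathlib

section
/- Let 𝔤 be a finite-dimensional complex Lie algebra with nondegenerate invariant symmetric bilinear form B, basis {x_a} and B-dual basis {x^a}. In the algebra U(𝔤) ⊗ U(𝔤) ⊗ U(𝔤) (tensor product of three copies of the universal enveloping algebra), set Ω^{(12)} = Σ_a x_a ⊗ x^a ⊗ 1, Ω^{(13)} = Σ_a x_a ⊗ 1 ⊗ x^a, and Ω^{(23)} = Σ_a 1 ⊗ x_a ⊗ x^a. Then Ω^{(12)} commutes with Ω^{(13)} + Ω^{(23)}: Ω^{(12)}·(Ω^{(13)} + Ω^{(23)}) = (Ω^{(13)} + Ω^{(23)})·Ω^{(12)}. -/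
open scoped TensorProduct

/-- `Ω^{(12)} = Σ_a x_a ⊗ x^a ⊗ 1` in `U(𝔤) ⊗ U(𝔤) ⊗ U(𝔤)`. -/
noncomputable def omega12 {L : Type*} [LieRing L] [LieAlgebra ℂ L]
    {ι : Type*} [Fintype ι] (x x' : ι → L) :
    UniversalEnvelopingAlgebra ℂ L ⊗[ℂ]
      (UniversalEnvelopingAlgebra ℂ L ⊗[ℂ] UniversalEnvelopingAlgebra ℂ L) :=
  ∑ a : ι, (UniversalEnvelopingAlgebra.ι ℂ (x a)) ⊗ₜ[ℂ]
    ((UniversalEnvelopingAlgebra.ι ℂ (x' a)) ⊗ₜ[ℂ] (1 : UniversalEnvelopingAlgebra ℂ L))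

/-- `Ω^{(13)} = Σ_a x_a ⊗ 1 ⊗ x^a` in `U(𝔤) ⊗ U(𝔤) ⊗ U(𝔤)`. -/
noncomputable def omega13 {L : Type*} [LieRing L] [LieAlgebra ℂ L]
    {ι : Type*} [Fintype ι] (x x' : ι → L) :
    UniversalEnvelopingAlgebra ℂ L ⊗[ℂ]
      (UniversalEnvelopingAlgebra ℂ L ⊗[ℂ] UniversalEnvelopingAlgebra ℂ L) :=
  ∑ a : ι, (UniversalEnvelopingAlgebra.ι ℂ (x a)) ⊗ₜ[ℂ]
    ((1 : UniversalEnvelopingAlgebra ℂ L) ⊗ₜ[ℂ] (UniversalEnvelopingAlgebra.ι ℂ (x' a)))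

/-- `Ω^{(23)} = Σ_a 1 ⊗ x_a ⊗ x^a` in `U(𝔤) ⊗ U(𝔤) ⊗ U(𝔤)`. -/
noncomputable def omega23 {L : Type*} [LieRing L] [LieAlgebra ℂ L]
    {ι : Type*} [Fintype ι] (x x' : ι → L) :
    UniversalEnvelopingAlgebra ℂ L ⊗[ℂ]
      (UniversalEnvelopingAlgebra ℂ L ⊗[ℂ] UniversalEnvelopingAlgebra ℂ L) :=
  ∑ a : ι, (1 : UniversalEnvelopingAlgebra ℂ L) ⊗ₜ[ℂ]
    ((UniversalEnvelopingAlgebra.ι ℂ (x a)) ⊗ₜ[ℂ] (UniversalEnvelopingAlgebra.ι ℂ (x' a)))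
/-!
The Casimir tensor `Ω = Σ_a x_a ⊗ x^a ∈ 𝔤 ⊗ 𝔤` is `𝔤`-invariant: expanding `[y, x^a]` in the
family `{x^a}` (which spans `𝔤` because `B` is nondegenerate) and using the invariance of `B`
turns `Σ_a x_a ⊗ [y, x^a]` into `-Σ_a [y, x_a] ⊗ x^a`. Hence the image of `Ω` in `U(𝔤) ⊗ U(𝔤)` commutes
with `Δ y = y ⊗ 1 + 1 ⊗ y` for every `y ∈ 𝔤`. Reassociating the triple tensor product,
`Ω^{(12)} = Ω ⊗ 1` and `Ω^{(13)} + Ω^{(23)} = Σ_b Δ(x_b) ⊗ x^b`, so the two commute.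
-/

namespace Module.Basis

variable {R L ι : Type*} [CommRing R] [AddCommGroup L] [Module R L] [Fintype ι] [DecidableEq ι]
  (x : Basis ι R L) {B : L →ₗ[R] L →ₗ[R] R} {x' : ι → L}

theorem sum_bilin_dual_smul (hdual : ∀ a b, B (x a) (x' b) = if a = b then 1 else 0) (u : L) :
    ∑ c, B u (x' c) • x c = u := by
  have hrepr : ∀ c, B u (x' c) = x.repr u c := fun c => by
    conv_lhs => rw [← x.sum_repr u]
    simp [hdual, -Module.Basis.sum_repr]
  simpa only [hrepr] using x.sum_repr u

theorem sum_bilin_smul_dual (hB : ∀ u, (∀ v, B v u = 0) → u = 0)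
    (hdual : ∀ a b, B (x a) (x' b) = if a = b then 1 else 0) (u : L) :
    ∑ c, B (x c) u • x' c = u := by
  refine (sub_eq_zero.mp (hB _ fun v => ?_)).symm
  suffices B.flip (u - ∑ c, B (x c) u • x' c) = 0 from LinearMap.congr_fun this v
  refine x.ext fun d => ?_
  simp [hdual]

theorem lie_sum_tmul_dual_eq_zero {R L ι : Type*} [CommRing R] [LieRing L] [LieAlgebra R L]
    [Fintype ι] [DecidableEq ι] (x : Basis ι R L) {B : L →ₗ[R] L →ₗ[R] R}
    (hB : ∀ u, (∀ v, B v u = 0) → u = 0) (hB_inv : ∀ u v w : L, B ⁅u, v⁆ w = B u ⁅v, w⁆)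
    {x' : ι → L} (hdual : ∀ a b, B (x a) (x' b) = if a = b then 1 else 0) (y : L) :
    ⁅y, ∑ a, x a ⊗ₜ[R] x' a⁆ = 0 := by
  have hright : ∑ a, x a ⊗ₜ[R] ⁅y, x' a⁆ = ∑ c, ⁅x c, y⁆ ⊗ₜ[R] x' c := calc
    ∑ a, x a ⊗ₜ[R] ⁅y, x' a⁆ = ∑ a, x a ⊗ₜ[R] ∑ c, B (x c) ⁅y, x' a⁆ • x' c := by
      simp only [x.sum_bilin_smul_dual hB hdual]
    _ = ∑ c, (∑ a, B ⁅x c, y⁆ (x' a) • x a) ⊗ₜ[R] x' c := by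
      simp only [TensorProduct.tmul_sum, TensorProduct.sum_tmul, TensorProduct.tmul_smul,
        TensorProduct.smul_tmul', hB_inv]
      exact Finset.sum_comm
    _ = ∑ c, ⁅x c, y⁆ ⊗ₜ[R] x' c := by simp only [x.sum_bilin_dual_smul hdual]
  simp only [lie_sum, TensorProduct.LieModule.lie_tmul_right, Finset.sum_add_distrib, hright]
  rw [← Finset.sum_add_distrib]
  refine Finset.sum_eq_zero fun a _ => ?_
  rw [← TensorProduct.add_tmul, ← lie_skew, neg_add_cancel, TensorProduct.zero_tmul]

end Module.Basis

namespace UniversalEnvelopingAlgebra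

variable {R L : Type*} [CommRing R] [LieRing L] [LieAlgebra R L]

attribute [local instance] LieRing.ofAssociativeRing

theorem map_ι_lie (y : L) (t : L ⊗[R] L) :
    TensorProduct.map (ι R (L := L)).toLinearMap (ι R (L := L)).toLinearMap ⁅y, t⁆ =
      (ι R y ⊗ₜ[R] 1 + 1 ⊗ₜ[R] ι R y) *
          TensorProduct.map (ι R (L := L)).toLinearMap (ι R (L := L)).toLinearMap t -
        TensorProduct.map (ι R (L := L)).toLinearMap (ι R (L := L)).toLinearMap t *
          (ι R y ⊗ₜ[R] 1 + 1 ⊗ₜ[R] ι R y) := by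
  induction t using TensorProduct.induction_on with
  | zero => simp
  | tmul u v =>
    simp only [TensorProduct.LieModule.lie_tmul_right, map_add, TensorProduct.map_tmul,
      LieHom.coe_toLinearMap, LieHom.map_lie, Ring.lie_def, add_mul, mul_add,
      Algebra.TensorProduct.tmul_mul_tmul, one_mul, mul_one, TensorProduct.sub_tmul,
      TensorProduct.tmul_sub]
    abel
  | add s t hs ht =>
    simp only [lie_add, map_add, hs, ht, mul_add, add_mul]
    abel

theorem commute_sum_ι_tmul_ι {κ : Type*} [Fintype κ] {y : L} {x x' : κ → L}
    (h : ⁅y, ∑ a, x a ⊗ₜ[R] x' a⁆ = 0) :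
    Commute (∑ a, ι R (x a) ⊗ₜ[R] ι R (x' a)) (ι R y ⊗ₜ[R] 1 + 1 ⊗ₜ[R] ι R y) := by
  have := map_ι_lie y (∑ a, x a ⊗ₜ[R] x' a)
  rw [h, map_zero, eq_comm, sub_eq_zero] at this
  simp only [map_sum, TensorProduct.map_tmul, LieHom.coe_toLinearMap] at this
  exact this.symm

end UniversalEnvelopingAlgebra

theorem omega12_commutes_with_omega13_add_omega23_general
    {L : Type*} [LieRing L] [LieAlgebra ℂ L]
    {ι : Type*} [Fintype ι] [DecidableEq ι] (x : Module.Basis ι ℂ L)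
    (B : L →ₗ[ℂ] L →ₗ[ℂ] ℂ)
    (hB_nondeg : ∀ u : L, (∀ v : L, B u v = 0) → u = 0)
    (hB_symm : ∀ u v : L, B u v = B v u)
    (hB_inv : ∀ u v w : L, B ⁅u, v⁆ w = B u ⁅v, w⁆)
    (x' : ι → L)
    (hdual : ∀ a b : ι, B (x a) (x' b) = if a = b then (1 : ℂ) else 0) :
    omega12 (⇑x) x' * (omega13 (⇑x) x' + omega23 (⇑x) x')
      = (omega13 (⇑x) x' + omega23 (⇑x) x') * omega12 (⇑x) x' := by
  have hB : ∀ u, (∀ v, B v u = 0) → u = 0 := fun u hu =>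
    hB_nondeg u fun v => hB_symm u v ▸ hu v
  let j := UniversalEnvelopingAlgebra.ι ℂ (L := L)
  let e := Algebra.TensorProduct.assoc ℂ ℂ ℂ (UniversalEnvelopingAlgebra ℂ L)
    (UniversalEnvelopingAlgebra ℂ L) (UniversalEnvelopingAlgebra ℂ L)
  have h12 : omega12 x x' = e ((∑ a, j (x a) ⊗ₜ j (x' a)) ⊗ₜ 1) := by
    simp only [omega12, e, TensorProduct.sum_tmul, map_sum, Algebra.TensorProduct.assoc_tmul]
    rfl
  have h3 : omega13 x x' + omega23 x x' = e (∑ b, (j (x b) ⊗ₜ 1 + 1 ⊗ₜ j (x b)) ⊗ₜ j (x' b)) := by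
    simp only [omega13, omega23, e, TensorProduct.add_tmul, Finset.sum_add_distrib, map_add,
      map_sum, Algebra.TensorProduct.assoc_tmul]
    rfl
  rw [h12, h3]
  refine (Commute.map (Commute.sum_right _ _ _ fun b _ => ?_) e).eq
  exact (UniversalEnvelopingAlgebra.commute_sum_ι_tmul_ι
    (x.lie_sum_tmul_dual_eq_zero hB hB_inv hdual (x b))).tmul (Commute.one_left _)

/-- For a finite-dimensional complex Lie algebra with nondegenerate invariant symmetric
bilinear form `B`, basis `{x_a}` and `B`-dual basis `{x^a}`, in
`U(𝔤) ⊗ U(𝔤) ⊗ U(𝔤)` the element `Ω^{(12)}` commutes with `Ω^{(13)} + Ω^{(23)}`. -/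
theorem omega12_commutes_with_omega13_add_omega23
    {L : Type*} [LieRing L] [LieAlgebra ℂ L] [FiniteDimensional ℂ L]
    {ι : Type*} [Fintype ι] [DecidableEq ι] (x : Module.Basis ι ℂ L)
    (B : L →ₗ[ℂ] L →ₗ[ℂ] ℂ)
    (hB_nondeg : ∀ u : L, (∀ v : L, B u v = 0) → u = 0)
    (hB_symm : ∀ u v : L, B u v = B v u)
    (hB_inv : ∀ u v w : L, B ⁅u, v⁆ w = B u ⁅v, w⁆)
    (x' : ι → L)
    (hdual : ∀ a b : ι, B (x a) (x' b) = if a = b then (1 : ℂ) else 0) :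
    omega12 (⇑x) x' * (omega13 (⇑x) x' + omega23 (⇑x) x')
      = (omega13 (⇑x) x' + omega23 (⇑x) x') * omega12 (⇑x) x' :=
  omega12_commutes_with_omega13_add_omega23_general x B hB_nondeg hB_symm hB_inv x' hdual
end

section
/- The Gaudin Hamiltonians pairwise commute: with 𝔤, B, {x_a}, {x^a} as in the context, for any 𝔤-modules M₁, …, M_ℓ (ℓ ≥ 2) and any distinct complex numbers z₁, …, z_ℓ, the operators H^1, …, H^ℓ on M₁ ⊗ ⋯ ⊗ M_ℓ satisfy H^i ∘ H^k = H^k ∘ H^i for all 1 ≤ i, k ≤ ℓ. -/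
open scoped TensorProduct

/-- The operator `x^{(i)}` on `M₁ ⊗ ⋯ ⊗ M_ℓ` acting as `x` on the `i`-th tensor factor
and as the identity on the others. -/
noncomputable def factorAction {L : Type*} [LieRing L] [LieAlgebra ℂ L]
    {ℓ : ℕ} (M : Fin ℓ → Type*) [∀ j, AddCommGroup (M j)] [∀ j, Module ℂ (M j)]
    [∀ j, LieRingModule L (M j)] [∀ j, LieModule ℂ L (M j)]
    (i : Fin ℓ) (x : L) :
    (⨂[ℂ] j, M j) →ₗ[ℂ] ⨂[ℂ] j, M j :=
  PiTensorProduct.map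
    (Function.update (fun j => (LinearMap.id : M j →ₗ[ℂ] M j)) i
      (LieModule.toEnd ℂ L (M i) x))

/-- `Ω^{(ij)} = Σ_a x_a^{(i)} ∘ (x^a)^{(j)}` on `M₁ ⊗ ⋯ ⊗ M_ℓ`, for a family
`{x_a}` with dual family `{x^a}`. -/
noncomputable def gaudinOmega {L : Type*} [LieRing L] [LieAlgebra ℂ L]
    {ι : Type*} [Fintype ι] (x x' : ι → L)
    {ℓ : ℕ} (M : Fin ℓ → Type*) [∀ j, AddCommGroup (M j)] [∀ j, Module ℂ (M j)]
    [∀ j, LieRingModule L (M j)] [∀ j, LieModule ℂ L (M j)]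
    (i j : Fin ℓ) :
    (⨂[ℂ] k, M k) →ₗ[ℂ] ⨂[ℂ] k, M k :=
  ∑ a : ι, factorAction M i (x a) ∘ₗ factorAction M j (x' a)

/-- The Gaudin Hamiltonian `H^i = Σ_{j ≠ i} Ω^{(ij)}/(z_i − z_j)` on `M₁ ⊗ ⋯ ⊗ M_ℓ`. -/
noncomputable def gaudinH {L : Type*} [LieRing L] [LieAlgebra ℂ L]
    {ι : Type*} [Fintype ι] (x x' : ι → L)
    {ℓ : ℕ} (M : Fin ℓ → Type*) [∀ j, AddCommGroup (M j)] [∀ j, Module ℂ (M j)]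
    [∀ j, LieRingModule L (M j)] [∀ j, LieModule ℂ L (M j)]
    (z : Fin ℓ → ℂ) (i : Fin ℓ) :
    (⨂[ℂ] k, M k) →ₗ[ℂ] ⨂[ℂ] k, M k :=
  ∑ j ∈ Finset.univ.filter (fun j => j ≠ i),
    (z i - z j)⁻¹ • gaudinOmega x x' M i j

/-!
Put `r i j = Ω^{(ij)} / (z_i - z_j)`, so that `H^i = ∑ j, r i j` (the term `j = i` vanishes
because `0⁻¹ = 0`). Since `{x_a}` and `{x^a}` are `B`-dual, the Casimir tensor `∑ a, x_a ⊗ x^a`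
is symmetric and, by invariance of `B`, `ad`-invariant. Hence `Ω^{(ij)} = Ω^{(ji)}`, operators
`Ω^{(ij)}` and `Ω^{(kl)}` on disjoint pairs of factors commute, and the infinitesimal braid
relation `[Ω^{(ij)}, Ω^{(ik)} + Ω^{(jk)}] = 0` holds. With the partial fraction identity
`1/((z_i-z_j)(z_i-z_k)) + 1/((z_i-z_k)(z_j-z_k)) = 1/((z_i-z_j)(z_j-z_k))` these give the
classical Yang–Baxter equation for `r`. Expanding `[H^i, H^k]`, only the terms sharing an index
survive, and they cancel in triples, one triple per index `m`, by that equation.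
-/

section DualBasis

variable {R L ι : Type*} [CommRing R] [AddCommGroup L] [Module R L] [DecidableEq ι]
  {x : Module.Basis ι R L} {B : L →ₗ[R] L →ₗ[R] R} {x' : ι → L}

theorem apply_dual_eq_repr (hdual : ∀ a b, B (x a) (x' b) = if a = b then 1 else 0)
    (u : L) (b : ι) : B u (x' b) = x.repr u b := by
  have : B.flip (x' b) = x.coord b := x.ext fun a => by simp [hdual, Finsupp.single_apply]
  exact LinearMap.congr_fun this u

variable [Fintype ι]

theorem sum_apply_dual_smul_basis (hdual : ∀ a b, B (x a) (x' b) = if a = b then 1 else 0)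
    (u : L) : ∑ b, B u (x' b) • x b = u := by
  simpa only [apply_dual_eq_repr hdual] using x.sum_repr u

theorem sum_basis_apply_smul_dual (hdual : ∀ a b, B (x a) (x' b) = if a = b then 1 else 0)
    (hB : B.SeparatingRight) (u : L) : ∑ b, B (x b) u • x' b = u := by
  refine sub_eq_zero.mp (hB _ fun v => ?_)
  calc B v (∑ b, B (x b) u • x' b - u)
      = B (∑ b, B v (x' b) • x b) u - B v u := by
        simp only [map_sub, map_sum, map_smul, LinearMap.sum_apply,
          LinearMap.smul_apply, smul_eq_mul, mul_comm]
    _ = 0 := by rw [sum_apply_dual_smul_basis hdual, sub_self]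

-- Identities of `∑ a, φ (x a) (x' a)` for arbitrary bilinear `φ` are identities of the Casimir
-- tensor `∑ a, x a ⊗ x' a`.
theorem sum_apply_basis_dual_comm {V : Type*} [AddCommGroup V] [Module R V]
    (hdual : ∀ a b, B (x a) (x' b) = if a = b then 1 else 0) (hB_symm : ∀ u v, B u v = B v u)
    (φ : L →ₗ[R] L →ₗ[R] V) : ∑ a, φ (x a) (x' a) = ∑ a, φ (x' a) (x a) := by
  have expand_left (a : ι) (v : L) : φ (x' a) v = ∑ b, B (x' a) (x' b) • φ (x b) v := by
    conv_lhs => rw [← sum_apply_dual_smul_basis hdual (x' a)]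
    simp only [map_sum, map_smul, LinearMap.sum_apply, LinearMap.smul_apply]
  have expand_right (a : ι) (v : L) : φ v (x' a) = ∑ b, B (x' a) (x' b) • φ v (x b) := by
    conv_lhs => rw [← sum_apply_dual_smul_basis hdual (x' a)]
    simp only [map_sum, map_smul]
  simp only [expand_left, expand_right]
  rw [Finset.sum_comm]
  exact Finset.sum_congr rfl fun a _ => Finset.sum_congr rfl fun b _ => by rw [hB_symm]

end DualBasis

section Invariance

variable {R L ι : Type*} [CommRing R] [LieRing L] [LieAlgebra R L] [Fintype ι] [DecidableEq ι]
  {x : Module.Basis ι R L} {B : L →ₗ[R] L →ₗ[R] R} {x' : ι → L}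

theorem sum_apply_lie_basis_dual {V : Type*} [AddCommGroup V] [Module R V]
    (hdual : ∀ a b, B (x a) (x' b) = if a = b then 1 else 0) (hB : B.SeparatingRight)
    (hB_inv : ∀ u v w, B ⁅u, v⁆ w = B u ⁅v, w⁆) (φ : L →ₗ[R] L →ₗ[R] V) (y : L) :
    ∑ a, φ ⁅x a, y⁆ (x' a) = ∑ a, φ (x a) ⁅y, x' a⁆ := by
  have expand_left (a : ι) : φ ⁅x a, y⁆ (x' a) = ∑ b, B ⁅x a, y⁆ (x' b) • φ (x b) (x' a) := by
    conv_lhs => rw [← sum_apply_dual_smul_basis hdual ⁅x a, y⁆]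
    simp only [map_sum, map_smul, LinearMap.sum_apply, LinearMap.smul_apply]
  have expand_right (a : ι) : φ (x a) ⁅y, x' a⁆ = ∑ b, B ⁅x b, y⁆ (x' a) • φ (x a) (x' b) := by
    conv_lhs => rw [← sum_basis_apply_smul_dual hdual hB ⁅y, x' a⁆]
    simp only [map_sum, map_smul, hB_inv]
  simp only [expand_left, expand_right]
  exact Finset.sum_comm

end Invariance

section ClassicalYangBaxter

variable {A n : Type*} [LieRing A] [Fintype n] {r : n → n → A}

theorem lie_sum_eq_lie_add_lie (hdiag : ∀ i, r i i = 0)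
    (hloc : ∀ i j k l, i ≠ k → i ≠ l → j ≠ k → j ≠ l → ⁅r i j, r k l⁆ = 0)
    {i j k : n} (hik : i ≠ k) (hjk : j ≠ k) :
    ⁅r i j, ∑ l, r k l⁆ = ⁅r i j, r k i⁆ + ⁅r i j, r k j⁆ := by
  rcases eq_or_ne i j with rfl | hij
  · simp [hdiag]
  rw [lie_sum]
  exact Fintype.sum_eq_add i j hij fun l ⟨hli, hlj⟩ => hloc i j k l hik hli.symm hjk hlj.symm

theorem lie_sum_eq_zero_of_classicalYangBaxter [DecidableEq n] (hdiag : ∀ i, r i i = 0)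
    (hanti : ∀ i j, r j i = -r i j)
    (hloc : ∀ i j k l, i ≠ k → i ≠ l → j ≠ k → j ≠ l → ⁅r i j, r k l⁆ = 0)
    (hcybe : ∀ i j k, i ≠ j → i ≠ k → j ≠ k →
      ⁅r i j, r i k⁆ + ⁅r i j, r j k⁆ + ⁅r i k, r j k⁆ = 0)
    (i k : n) : ⁅∑ j, r i j, ∑ l, r k l⁆ = 0 := by
  rcases eq_or_ne i k with rfl | hik
  · exact lie_self _
  set g : n → A := fun j => ⁅r i j, r k i⁆ + ⁅r i j, r k j⁆
  have hgk : g k = 0 := by simp [g, hdiag, hanti i k]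
  have hsum : ⁅∑ j, r i j, ∑ l, r k l⁆ = ⁅r i k, ∑ l, r k l⁆ + ∑ j, g j := by
    rw [sum_lie, Fintype.sum_eq_add_sum_compl k, Fintype.sum_eq_add_sum_compl k g, hgk, zero_add]
    exact congrArg _ (Finset.sum_congr rfl fun j hj =>
      lie_sum_eq_lie_add_lie hdiag hloc hik (by simpa using hj))
  have hterm (m : n) : ⁅r i k, r k m⁆ + g m = 0 := by
    rcases eq_or_ne m i with rfl | hmi
    · simp [g, hdiag, hanti m k]
    rcases eq_or_ne m k with rfl | hmk
    · simp [g, hdiag, hanti i m]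
    rw [← add_assoc, hanti i k, lie_neg, lie_skew, add_comm ⁅r i k, r k m⁆]
    exact hcybe i k m hik hmi.symm hmk.symm
  rw [hsum, lie_sum, ← Finset.sum_add_distrib]
  exact Finset.sum_eq_zero fun m _ => hterm m

end ClassicalYangBaxter

section InfinitesimalBraid

variable {K A n : Type*} [Field K] [LieRing A] [LieAlgebra K A] {Ω : n → n → A} {z : n → K}

theorem inv_sub_smul_swap (hsymm : ∀ i j, i ≠ j → Ω j i = Ω i j) (i j : n) :
    (z j - z i)⁻¹ • Ω j i = -((z i - z j)⁻¹ • Ω i j) := by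
  rcases eq_or_ne i j with rfl | hij
  · simp
  rw [hsymm i j hij, ← neg_sub, inv_neg, neg_smul]

theorem inv_sub_smul_classicalYangBaxter (hsymm : ∀ i j, i ≠ j → Ω j i = Ω i j)
    (hbraid : ∀ i j k, i ≠ j → i ≠ k → j ≠ k → ⁅Ω i j, Ω i k + Ω j k⁆ = 0)
    (hz : Function.Injective z) {i j k : n} (hij : i ≠ j) (hik : i ≠ k) (hjk : j ≠ k) :
    ⁅(z i - z j)⁻¹ • Ω i j, (z i - z k)⁻¹ • Ω i k⁆ + ⁅(z i - z j)⁻¹ • Ω i j, (z j - z k)⁻¹ • Ω j k⁆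
      + ⁅(z i - z k)⁻¹ • Ω i k, (z j - z k)⁻¹ • Ω j k⁆ = 0 := by
  have h_ijk : ⁅Ω i j, Ω i k⁆ + ⁅Ω i j, Ω j k⁆ = 0 := by
    rw [← lie_add]; exact hbraid i j k hij hik hjk
  have h_ikj : ⁅Ω i k, Ω j k⁆ = ⁅Ω i j, Ω i k⁆ := by
    have := hbraid i k j hik hij hjk.symm
    rwa [hsymm j k hjk, lie_add, ← lie_skew (Ω i k) (Ω i j), neg_add_eq_zero, eq_comm] at this
  have hscalar : (z i - z k)⁻¹ * (z i - z j)⁻¹ + (z j - z k)⁻¹ * (z i - z k)⁻¹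
      = (z j - z k)⁻¹ * (z i - z j)⁻¹ := by
    have := sub_ne_zero.mpr (hz.ne hij)
    have := sub_ne_zero.mpr (hz.ne hik)
    have := sub_ne_zero.mpr (hz.ne hjk)
    field_simp
    ring
  simp only [smul_lie, lie_smul, smul_smul, h_ikj]
  rw [add_right_comm, ← add_smul, hscalar, ← smul_add, h_ijk, smul_zero]

theorem lie_sum_inv_sub_smul_eq_zero [Fintype n] [DecidableEq n]
    (hsymm : ∀ i j, i ≠ j → Ω j i = Ω i j)
    (hloc : ∀ i j k l, i ≠ k → i ≠ l → j ≠ k → j ≠ l → ⁅Ω i j, Ω k l⁆ = 0)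
    (hbraid : ∀ i j k, i ≠ j → i ≠ k → j ≠ k → ⁅Ω i j, Ω i k + Ω j k⁆ = 0)
    (hz : Function.Injective z) (i k : n) :
    ⁅∑ j, (z i - z j)⁻¹ • Ω i j, ∑ l, (z k - z l)⁻¹ • Ω k l⁆ = 0 :=
  lie_sum_eq_zero_of_classicalYangBaxter (by simp) (inv_sub_smul_swap hsymm)
    (fun i j k l hik hil hjk hjl => by rw [smul_lie, lie_smul, hloc i j k l hik hil hjk hjl,
      smul_zero, smul_zero])
    (fun _ _ _ => inv_sub_smul_classicalYangBaxter hsymm hbraid hz) i k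

end InfinitesimalBraid

theorem lie_mul_mul_eq_lie_mul_mul {A : Type*} [Ring A] {a b c d : A}
    (hbc : Commute b c) (hbd : Commute b d) (hda : Commute d a) :
    ⁅a * b, c * d⁆ = ⁅a, c⁆ * (b * d) := by
  rw [Ring.lie_def, Ring.lie_def, sub_mul, hbc.mul_mul_mul_comm, hda.mul_mul_mul_comm, ← hbd.eq]

theorem lie_mul_mul_eq_mul_lie_mul {A : Type*} [Ring A] {a b c d : A}
    (hac : Commute a c) (had : Commute a d) (hbd : Commute b d) :
    ⁅a * b, c * d⁆ = a * (⁅b, c⁆ * d) := by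
  rw [Ring.lie_def, Ring.lie_def, (hac.mul_right had).symm.left_comm, mul_assoc c d b, ← hbd.eq]
  simp only [sub_mul, mul_sub, mul_assoc]

attribute [local instance] LieRing.ofAssociativeRing

section FactorAction

variable {L : Type*} [LieRing L] [LieAlgebra ℂ L]
  {ℓ : ℕ} (M : Fin ℓ → Type*) [∀ j, AddCommGroup (M j)] [∀ j, Module ℂ (M j)]
  [∀ j, LieRingModule L (M j)] [∀ j, LieModule ℂ L (M j)]

theorem factorAction_tprod (i : Fin ℓ) (y : L) (f : ∀ j, M j) :
    factorAction M i y (PiTensorProduct.tprod ℂ f)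
      = PiTensorProduct.tprod ℂ (Function.update f i ⁅y, f i⁆) := by
  rw [factorAction, PiTensorProduct.map_tprod]
  congr 1
  ext j
  rcases eq_or_ne j i with rfl | h
  · simp
  · simp [Function.update_of_ne h]

variable (L) in
noncomputable def factorActionHom (i : Fin ℓ) : L →ₗ⁅ℂ⁆ Module.End ℂ (⨂[ℂ] j, M j) where
  toFun := factorAction M i
  map_add' y y' := PiTensorProduct.ext <| MultilinearMap.ext fun f => by
    simp [factorAction_tprod, add_lie, MultilinearMap.map_update_add]
  map_smul' c y := PiTensorProduct.ext <| MultilinearMap.ext fun f => by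
    simp [factorAction_tprod, smul_lie, MultilinearMap.map_update_smul]
  map_lie' {y y'} := PiTensorProduct.ext <| MultilinearMap.ext fun f => by
    simp [factorAction_tprod, Ring.lie_def, ← MultilinearMap.map_update_sub, lie_lie]

@[simp]
theorem factorActionHom_apply (i : Fin ℓ) (y : L) : factorActionHom L M i y = factorAction M i y :=
  rfl

variable {M}

theorem factorAction_lie (i : Fin ℓ) (u v : L) :
    factorAction M i ⁅u, v⁆ = ⁅factorAction M i u, factorAction M i v⁆ :=
  (factorActionHom L M i).map_lie u v

theorem factorAction_add (i : Fin ℓ) (u v : L) :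
    factorAction M i (u + v) = factorAction M i u + factorAction M i v :=
  (factorActionHom L M i).map_add u v

theorem factorAction_zero (i : Fin ℓ) : factorAction M i (0 : L) = 0 :=
  (factorActionHom L M i).map_zero

theorem commute_factorAction {i j : Fin ℓ} (h : i ≠ j) (u v : L) :
    Commute (factorAction M i u) (factorAction M j v) :=
  PiTensorProduct.ext <| MultilinearMap.ext fun f => by
    simp [factorAction_tprod, Function.update_of_ne h, Function.update_of_ne h.symm,
      Function.update_comm h]

end FactorAction

section GaudinOmega

variable {L ι : Type*} [LieRing L] [LieAlgebra ℂ L] [Fintype ι]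
  {ℓ : ℕ} {M : Fin ℓ → Type*} [∀ j, AddCommGroup (M j)] [∀ j, Module ℂ (M j)]
  [∀ j, LieRingModule L (M j)] [∀ j, LieModule ℂ L (M j)]

theorem gaudinOmega_eq_sum_mul (x x' : ι → L) (i j : Fin ℓ) :
    gaudinOmega x x' M i j = ∑ a, factorAction M i (x a) * factorAction M j (x' a) :=
  rfl

theorem commute_gaudinOmega (x x' : ι → L) {i j k l : Fin ℓ}
    (hik : i ≠ k) (hil : i ≠ l) (hjk : j ≠ k) (hjl : j ≠ l) :
    Commute (gaudinOmega x x' M i j) (gaudinOmega x x' M k l) := by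
  have h (a b : ι) : Commute (factorAction M i (x a) * factorAction M j (x' a))
      (factorAction M k (x b) * factorAction M l (x' b)) := by
    have hi := (commute_factorAction (M := M) hik (x a) (x b)).mul_right
      (commute_factorAction hil (x a) (x' b))
    have hj := (commute_factorAction (M := M) hjk (x' a) (x b)).mul_right
      (commute_factorAction hjl (x' a) (x' b))
    exact hi.mul_left hj
  exact .sum_left _ _ _ fun a _ => .sum_right _ _ _ fun b _ => h a b

theorem gaudinH_eq_sum (x x' : ι → L) (z : Fin ℓ → ℂ) (i : Fin ℓ) :
    gaudinH x x' M z i = ∑ j, (z i - z j)⁻¹ • gaudinOmega x x' M i j :=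
  Finset.sum_filter_of_ne fun j _ hj => by
    rintro rfl
    simp at hj

variable [DecidableEq ι] {x : Module.Basis ι ℂ L} {B : L →ₗ[ℂ] L →ₗ[ℂ] ℂ} {x' : ι → L}

theorem gaudinOmega_comm (hdual : ∀ a b, B (x a) (x' b) = if a = b then 1 else 0)
    (hB_symm : ∀ u v, B u v = B v u) {i j : Fin ℓ} (hij : i ≠ j) :
    gaudinOmega x x' M i j = gaudinOmega x x' M j i := by
  let φ : L →ₗ[ℂ] L →ₗ[ℂ] Module.End ℂ (⨂[ℂ] k, M k) :=
    (LinearMap.mul ℂ _).compl₁₂ (factorActionHom L M j).toLinearMap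
      (factorActionHom L M i).toLinearMap
  calc gaudinOmega x x' M i j = ∑ a, φ (x' a) (x a) := by
        simp [φ, gaudinOmega_eq_sum_mul, (commute_factorAction hij _ _).eq]
    _ = gaudinOmega x x' M j i := by
        rw [← sum_apply_basis_dual_comm hdual hB_symm φ]
        simp [φ, gaudinOmega_eq_sum_mul]

end GaudinOmega

section GaudinBraid

variable {L ι : Type*} [LieRing L] [LieAlgebra ℂ L] [Fintype ι] [DecidableEq ι]
  {ℓ : ℕ} {M : Fin ℓ → Type*} [∀ j, AddCommGroup (M j)] [∀ j, Module ℂ (M j)]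
  [∀ j, LieRingModule L (M j)] [∀ j, LieModule ℂ L (M j)]
  {x : Module.Basis ι ℂ L} {B : L →ₗ[ℂ] L →ₗ[ℂ] ℂ} {x' : ι → L}

theorem sum_factorAction_lie_basis_dual_mul
    (hdual : ∀ a b, B (x a) (x' b) = if a = b then 1 else 0) (hB : B.SeparatingRight)
    (hB_inv : ∀ u v w, B ⁅u, v⁆ w = B u ⁅v, w⁆) (i j : Fin ℓ) (y : L)
    (C : Module.End ℂ (⨂[ℂ] k, M k)) :
    ∑ a, factorAction M i ⁅x a, y⁆ * (factorAction M j (x' a) * C)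
      = ∑ a, factorAction M i (x a) * (factorAction M j ⁅y, x' a⁆ * C) := by
  simpa [-LieHom.map_lie] using sum_apply_lie_basis_dual hdual hB hB_inv
    ((LinearMap.mul ℂ _).compl₁₂ (factorActionHom L M i).toLinearMap
      (LinearMap.mulRight ℂ C ∘ₗ (factorActionHom L M j).toLinearMap)) y

theorem lie_gaudinOmega_add_eq_zero
    (hdual : ∀ a b, B (x a) (x' b) = if a = b then 1 else 0) (hB : B.SeparatingRight)
    (hB_inv : ∀ u v w, B ⁅u, v⁆ w = B u ⁅v, w⁆) {i j k : Fin ℓ}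
    (hij : i ≠ j) (hik : i ≠ k) (hjk : j ≠ k) :
    ⁅gaudinOmega x x' M i j, gaudinOmega x x' M i k + gaudinOmega x x' M j k⁆ = 0 := by
  set T : ι → ι → Module.End ℂ (⨂[ℂ] k, M k) := fun a b =>
    factorAction M i (x a) * (factorAction M j ⁅x b, x' a⁆ * factorAction M k (x' b))
  have h_ik : ⁅gaudinOmega x x' M i j, gaudinOmega x x' M i k⁆ = ∑ a, ∑ b, T a b := by
    calc _ = ∑ a, ∑ b,
          factorAction M i ⁅x a, x b⁆ * (factorAction M j (x' a) * factorAction M k (x' b)) := by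
          simp only [gaudinOmega_eq_sum_mul, sum_lie]
          simp only [lie_sum]
          refine Finset.sum_congr rfl fun a _ => Finset.sum_congr rfl fun b _ => ?_
          rw [lie_mul_mul_eq_lie_mul_mul (commute_factorAction hij.symm _ _)
            (commute_factorAction hjk _ _) (commute_factorAction hik.symm _ _), factorAction_lie]
      _ = ∑ b, ∑ a,
          factorAction M i ⁅x a, x b⁆ * (factorAction M j (x' a) * factorAction M k (x' b)) :=
        Finset.sum_comm
      _ = ∑ b, ∑ a, T a b := Finset.sum_congr rfl fun b _ =>
          sum_factorAction_lie_basis_dual_mul hdual hB hB_inv i j (x b) _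
      _ = ∑ a, ∑ b, T a b := Finset.sum_comm
  have h_jk : ⁅gaudinOmega x x' M i j, gaudinOmega x x' M j k⁆ = ∑ a, ∑ b,
      factorAction M i (x a) * (factorAction M j ⁅x' a, x b⁆ * factorAction M k (x' b)) := by
    simp only [gaudinOmega_eq_sum_mul, sum_lie]
    simp only [lie_sum]
    refine Finset.sum_congr rfl fun a _ => Finset.sum_congr rfl fun b _ => ?_
    rw [lie_mul_mul_eq_mul_lie_mul (commute_factorAction hij _ _) (commute_factorAction hik _ _)
      (commute_factorAction hjk _ _), ← factorAction_lie]
  rw [lie_add, h_ik, h_jk, ← Finset.sum_add_distrib]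
  refine Finset.sum_eq_zero fun a _ => ?_
  rw [← Finset.sum_add_distrib]
  refine Finset.sum_eq_zero fun b _ => ?_
  rw [← mul_add, ← add_mul, ← factorAction_add, ← lie_skew (x' a), add_neg_cancel,
    factorAction_zero, zero_mul, mul_zero]

end GaudinBraid

theorem gaudin_hamiltonians_commute_general
    {L : Type*} [LieRing L] [LieAlgebra ℂ L]
    {ι : Type*} [Fintype ι] [DecidableEq ι] (x : Module.Basis ι ℂ L)
    (B : L →ₗ[ℂ] L →ₗ[ℂ] ℂ)
    (hB_nondeg : ∀ u : L, (∀ v : L, B u v = 0) → u = 0)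
    (hB_symm : ∀ u v : L, B u v = B v u)
    (hB_inv : ∀ u v w : L, B ⁅u, v⁆ w = B u ⁅v, w⁆)
    (x' : ι → L)
    (hdual : ∀ a b : ι, B (x a) (x' b) = if a = b then (1 : ℂ) else 0)
    {ℓ : ℕ}
    (M : Fin ℓ → Type*) [∀ j, AddCommGroup (M j)] [∀ j, Module ℂ (M j)]
    [∀ j, LieRingModule L (M j)] [∀ j, LieModule ℂ L (M j)]
    (z : Fin ℓ → ℂ) (hz : Function.Injective z)
    (i k : Fin ℓ) :
    gaudinH (⇑x) x' M z i ∘ₗ gaudinH (⇑x) x' M z k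
      = gaudinH (⇑x) x' M z k ∘ₗ gaudinH (⇑x) x' M z i := by
  have hB : B.SeparatingRight := fun v hv => hB_nondeg v fun u => (hB_symm v u).trans (hv u)
  have key := lie_sum_inv_sub_smul_eq_zero (A := Module.End ℂ (⨂[ℂ] j, M j))
    (fun i j hij => (gaudinOmega_comm hdual hB_symm hij).symm)
    (fun i j k l hik hil hjk hjl => (commute_gaudinOmega x x' hik hil hjk hjl).lie_eq)
    (fun i j k hij hik hjk => lie_gaudinOmega_add_eq_zero hdual hB hB_inv hij hik hjk) hz i k
  rw [← gaudinH_eq_sum, ← gaudinH_eq_sum] at key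
  exact (commute_iff_lie_eq.mpr key).eq

/-- The Gaudin Hamiltonians pairwise commute: for a finite-dimensional complex Lie
algebra with nondegenerate invariant symmetric bilinear form `B`, basis `{x_a}` and
`B`-dual basis `{x^a}`, modules `M₁, …, M_ℓ` (`ℓ ≥ 2`) and distinct complex numbers
`z₁, …, z_ℓ`, one has `H^i ∘ H^k = H^k ∘ H^i` for all `i, k`. -/
theorem gaudin_hamiltonians_commute
    {L : Type*} [LieRing L] [LieAlgebra ℂ L] [FiniteDimensional ℂ L]
    {ι : Type*} [Fintype ι] [DecidableEq ι] (x : Module.Basis ι ℂ L)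
    (B : L →ₗ[ℂ] L →ₗ[ℂ] ℂ)
    (hB_nondeg : ∀ u : L, (∀ v : L, B u v = 0) → u = 0)
    (hB_symm : ∀ u v : L, B u v = B v u)
    (hB_inv : ∀ u v w : L, B ⁅u, v⁆ w = B u ⁅v, w⁆)
    (x' : ι → L)
    (hdual : ∀ a b : ι, B (x a) (x' b) = if a = b then (1 : ℂ) else 0)
    {ℓ : ℕ} (hℓ : 2 ≤ ℓ)
    (M : Fin ℓ → Type*) [∀ j, AddCommGroup (M j)] [∀ j, Module ℂ (M j)]
    [∀ j, LieRingModule L (M j)] [∀ j, LieModule ℂ L (M j)]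
    (z : Fin ℓ → ℂ) (hz : Function.Injective z)
    (i k : Fin ℓ) :
    gaudinH (⇑x) x' M z i ∘ₗ gaudinH (⇑x) x' M z k
      = gaudinH (⇑x) x' M z k ∘ₗ gaudinH (⇑x) x' M z i :=
  gaudin_hamiltonians_commute_general x B hB_nondeg hB_symm hB_inv x' hdual M z hz i k
end

section
/- Let 𝔤 = gl(n,ℂ) with Casimir tensor Ω = Σ_{i,j=1}^n E_{ij} ⊗ E_{ji}. For gl(n,ℂ)-modules M₁, …, M_ℓ (ℓ ≥ 2), distinct complex numbers z₁, …, z_ℓ, and M = M₁ ⊗ ⋯ ⊗ M_ℓ, let M^{sing} = {v ∈ M : E_{ij}·v = 0 for all 1 ≤ i < j ≤ n} denote the space spanned by singular vectors, where E_{ij} acts diagonally on M. Then each Gaudin Hamiltonian H^i leaves M^{sing} invariant: H^i(M^{sing}) ⊆ M^{sing}. -/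
open scoped TensorProduct

/-- The diagonal action of `x ∈ L` on `M₁ ⊗ ⋯ ⊗ M_ℓ`:
`x·(m₁⊗⋯⊗m_ℓ) = Σ_i m₁⊗⋯⊗(x·m_i)⊗⋯⊗m_ℓ`. -/
noncomputable def diagAction {L : Type*} [LieRing L] [LieAlgebra ℂ L]
    {ℓ : ℕ} (M : Fin ℓ → Type*) [∀ j, AddCommGroup (M j)] [∀ j, Module ℂ (M j)]
    [∀ j, LieRingModule L (M j)] [∀ j, LieModule ℂ L (M j)]
    (x : L) :
    (⨂[ℂ] k, M k) →ₗ[ℂ] ⨂[ℂ] k, M k :=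
  ∑ i : Fin ℓ, factorAction M i x

attribute [local instance 100] LieRing.ofAssociativeRing

/-!
The operators `x ↦ x^{(i)}` are Lie algebra homomorphisms `L → End(M)` whose images commute
for distinct `i`. Hence the diagonal action `Δ(x) = Σ_k x^{(k)}` satisfies
`[Δ(x), y^{(i)} w^{(j)}] = [x, y]^{(i)} w^{(j)} + y^{(i)} [x, w]^{(j)}`, i.e. `[Δ(x), Ω^{(ij)}]`
is the image of `[x, Ω]` under `y ⊗ w ↦ y^{(i)} w^{(j)}`. The Casimir tensor of `gl(n)` is
ad-invariant, so every `H^i` commutes with the diagonal action and therefore preserves the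
common kernel of the `E_{rs}`.
-/

section TensorMul

variable {R A L ι : Type*} [CommRing R] [Ring A] [Algebra R A] [LieRing L] [LieAlgebra R L]
  (ρ : ι → L →ₗ⁅R⁆ A)

noncomputable def tensorMul (i j : ι) : L ⊗[R] L →ₗ[R] A :=
  TensorProduct.lift ((LinearMap.mul R A).compl₁₂ (ρ i : L →ₗ[R] A) (ρ j))

lemma tensorMul_tmul (i j : ι) (y w : L) : tensorMul ρ i j (y ⊗ₜ w) = ρ i y * ρ j w := rfl

variable [Fintype ι] {ρ}

lemma lie_sum_apply_of_commute (hρ : Pairwise fun k i => ∀ x y, Commute (ρ k x) (ρ i y))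
    (x y : L) (i : ι) : ⁅∑ k, ρ k x, ρ i y⁆ = ρ i ⁅x, y⁆ := by
  rw [sum_lie, Finset.sum_eq_single i (fun k _ hk => (hρ hk x y).lie_eq) (by simp),
    LieHom.map_lie]

lemma lie_sum_tensorMul (hρ : Pairwise fun k i => ∀ x y, Commute (ρ k x) (ρ i y))
    (i j : ι) (x : L) (t : L ⊗[R] L) :
    ⁅∑ k, ρ k x, tensorMul ρ i j t⁆ = tensorMul ρ i j ⁅x, t⁆ := by
  induction t using TensorProduct.induction_on with
  | zero => simp
  | add t u ht hu => simp only [map_add, lie_add, ht, hu]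
  | tmul y w =>
    have leibniz : ∀ a b c : A, ⁅a, b * c⁆ = ⁅a, b⁆ * c + b * ⁅a, c⁆ := fun a b c => by
      simp only [LieRing.of_associative_ring_bracket]; noncomm_ring
    rw [tensorMul_tmul, leibniz, lie_sum_apply_of_commute hρ, lie_sum_apply_of_commute hρ,
      TensorProduct.LieModule.lie_tmul_right, map_add, tensorMul_tmul, tensorMul_tmul]

end TensorMul

section Slot

variable {R ι : Type*} [CommRing R] [DecidableEq ι] (M : ι → Type*) [∀ j, AddCommGroup (M j)]
  [∀ j, Module R (M j)]

noncomputable def slotAlgHom (i : ι) : Module.End R (M i) →ₐ[R] Module.End R (⨂[R] j, M j) :=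
  AlgHom.ofLinearMap ((PiTensorProduct.mapMultilinear R M M).toLinearMap 1 i)
    (by
      change PiTensorProduct.map (Pi.mulSingle i 1) = 1
      rw [Pi.mulSingle_one]
      exact PiTensorProduct.map_one)
    (fun φ ψ => by
      change PiTensorProduct.map (Pi.mulSingle i (φ * ψ)) =
        PiTensorProduct.map (Pi.mulSingle i φ) * PiTensorProduct.map (Pi.mulSingle i ψ)
      rw [Pi.mulSingle_mul]
      exact PiTensorProduct.map_mul _ _)

lemma slotAlgHom_apply (i : ι) (φ : Module.End R (M i)) :
    slotAlgHom M i φ = PiTensorProduct.mapMonoidHom (Pi.mulSingle i φ) := rfl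

lemma slotAlgHom_commute {i k : ι} (h : k ≠ i) (φ : Module.End R (M k)) (ψ : Module.End R (M i)) :
    Commute (slotAlgHom M k φ) (slotAlgHom M i ψ) := by
  rw [slotAlgHom_apply, slotAlgHom_apply]
  exact (Pi.mulSingle_commute (f := fun j => Module.End R (M j)) h φ ψ).map _

end Slot

section Factor

variable {L : Type*} [LieRing L] [LieAlgebra ℂ L] {ℓ : ℕ} (M : Fin ℓ → Type*)
  [∀ j, AddCommGroup (M j)] [∀ j, Module ℂ (M j)] [∀ j, LieRingModule L (M j)]
  [∀ j, LieModule ℂ L (M j)]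

noncomputable def factorLieHom (i : Fin ℓ) : L →ₗ⁅ℂ⁆ Module.End ℂ (⨂[ℂ] j, M j) :=
  (slotAlgHom M i).toLieHom.comp (LieModule.toEnd ℂ L (M i))

lemma factorLieHom_apply (i : Fin ℓ) (x : L) : factorLieHom M i x = factorAction M i x := rfl

lemma factorLieHom_commute :
    Pairwise fun k i => ∀ x y : L, Commute (factorLieHom M k x) (factorLieHom M i y) :=
  fun _ _ h _ _ => slotAlgHom_commute M h _ _

lemma diagAction_eq_sum (x : L) : diagAction M x = ∑ k, factorLieHom M k x := rfl

lemma gaudinOmega_eq_tensorMul {ι : Type*} [Fintype ι] (x x' : ι → L) (i j : Fin ℓ) :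
    gaudinOmega x x' M i j = tensorMul (factorLieHom M) i j (∑ a, x a ⊗ₜ x' a) := by
  simp [gaudinOmega, map_sum, tensorMul_tmul, factorLieHom_apply, Module.End.mul_eq_comp]

end Factor

section Casimir

open Matrix

variable (m R : Type*) [Fintype m] [DecidableEq m] [CommRing R]

noncomputable def glCasimir : Matrix m m R ⊗[R] Matrix m m R :=
  ∑ p : m × m, single p.1 p.2 1 ⊗ₜ single p.2 p.1 1

variable {m R}

lemma lie_single_single (u v p q : m) :
    ⁅single u v (1 : R), single p q (1 : R)⁆ =
      (if v = p then single u q (1 : R) else 0) - (if q = u then single p v 1 else 0) := by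
  rw [LieRing.of_associative_ring_bracket]
  split_ifs <;> simp_all [single_mul_single_of_ne]

lemma lie_single_glCasimir (u v : m) : ⁅single u v (1 : R), glCasimir m R⁆ = 0 := by
  simp [glCasimir, lie_sum, lie_single_single, TensorProduct.sub_tmul, TensorProduct.tmul_sub,
    TensorProduct.ite_tmul, TensorProduct.tmul_ite, Finset.sum_add_distrib,
    Finset.sum_sub_distrib, Fintype.sum_prod_type]

lemma lie_glCasimir (y : Matrix m m R) : ⁅y, glCasimir m R⁆ = 0 := by
  have single_eq_smul (i j : m) : single i j (y i j) = y i j • single i j 1 := by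
    simp [smul_single]
  rw [matrix_eq_sum_single y]
  simp only [sum_lie, single_eq_smul, smul_lie, lie_single_glCasimir, smul_zero,
    Finset.sum_const_zero]

end Casimir

section Gaudin

variable {L : Type*} [LieRing L] [LieAlgebra ℂ L] {ℓ : ℕ} (M : Fin ℓ → Type*)
  [∀ j, AddCommGroup (M j)] [∀ j, Module ℂ (M j)] [∀ j, LieRingModule L (M j)]
  [∀ j, LieModule ℂ L (M j)] {ι : Type*} [Fintype ι] {x x' : ι → L} {y : L}

lemma commute_diagAction_gaudinOmega (hy : ⁅y, ∑ a, x a ⊗ₜ[ℂ] x' a⁆ = 0) (i j : Fin ℓ) :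
    Commute (diagAction M y) (gaudinOmega x x' M i j) := by
  rw [commute_iff_lie_eq, diagAction_eq_sum, gaudinOmega_eq_tensorMul,
    lie_sum_tensorMul (factorLieHom_commute M), hy, map_zero]

lemma commute_diagAction_gaudinH (hy : ⁅y, ∑ a, x a ⊗ₜ[ℂ] x' a⁆ = 0) (z : Fin ℓ → ℂ)
    (i : Fin ℓ) : Commute (diagAction M y) (gaudinH x x' M z i) :=
  Commute.sum_right _ _ _ fun j _ => (commute_diagAction_gaudinOmega M hy i j).smul_right _

end Gaudin

theorem gl_gaudin_hamiltonian_preserves_singular_vectors_general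
    (n : ℕ) {ℓ : ℕ}
    (M : Fin ℓ → Type*) [∀ j, AddCommGroup (M j)] [∀ j, Module ℂ (M j)]
    [∀ j, LieRingModule (Matrix (Fin n) (Fin n) ℂ) (M j)]
    [∀ j, LieModule ℂ (Matrix (Fin n) (Fin n) ℂ) (M j)]
    (z : Fin ℓ → ℂ)
    (k : Fin ℓ) (v : ⨂[ℂ] j, M j)
    (hv : ∀ r s : Fin n, r < s →
      diagAction M (Matrix.single r s (1 : ℂ)) v = 0) :
    ∀ r s : Fin n, r < s →
      diagAction M (Matrix.single r s (1 : ℂ))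
        (gaudinH (fun p : Fin n × Fin n => Matrix.single p.1 p.2 (1 : ℂ))
          (fun p : Fin n × Fin n => Matrix.single p.2 p.1 (1 : ℂ))
          M z k v) = 0 := by
  intro r s hrs
  have hcomm := commute_diagAction_gaudinH M (lie_glCasimir (Matrix.single r s 1)) z k
  rw [← Module.End.mul_apply, hcomm.eq, Module.End.mul_apply, hv r s hrs, map_zero]

/-- For `𝔤 = gl(n,ℂ)` with Casimir tensor `Ω = Σ_{i,j} E_{ij} ⊗ E_{ji}`, each Gaudin
Hamiltonian `H^k` on `M = M₁ ⊗ ⋯ ⊗ M_ℓ` leaves the space of singular vectors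
`M^{sing} = {v : E_{rs}·v = 0 for all r < s}` invariant, where `E_{rs}` acts
diagonally on `M`. -/
theorem gl_gaudin_hamiltonian_preserves_singular_vectors
    (n : ℕ) {ℓ : ℕ} (hℓ : 2 ≤ ℓ)
    (M : Fin ℓ → Type*) [∀ j, AddCommGroup (M j)] [∀ j, Module ℂ (M j)]
    [∀ j, LieRingModule (Matrix (Fin n) (Fin n) ℂ) (M j)]
    [∀ j, LieModule ℂ (Matrix (Fin n) (Fin n) ℂ) (M j)]
    (z : Fin ℓ → ℂ) (hz : Function.Injective z)
    (k : Fin ℓ) (v : ⨂[ℂ] j, M j)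
    (hv : ∀ r s : Fin n, r < s →
      diagAction M (Matrix.single r s (1 : ℂ)) v = 0) :
    ∀ r s : Fin n, r < s →
      diagAction M (Matrix.single r s (1 : ℂ))
        (gaudinH (fun p : Fin n × Fin n => Matrix.single p.1 p.2 (1 : ℂ))
          (fun p : Fin n × Fin n => Matrix.single p.2 p.1 (1 : ℂ))
          M z k v) = 0 :=
  gl_gaudin_hamiltonian_preserves_singular_vectors_general n M z k v hv
end
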